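/- arXiv:2506.15542 — 4 statements merged into one kernel-verified Lean document; each statement's English description precedes it below -/
import Mathlib

section
/- Let $E$ be a measurable space, $U$ a nonempty set, $c_n : E \times U \to \mathbb{R}$ bounded, and $P_n^a(x, \cdot)$ Markov kernels on $E$ indexed by $a \in U$. Define $T_n v(x) = \sup_{a \in U}\big[c_n(x,a) + \int_E v(y)\, P_n^a(x, dy)\big]$ for bounded measurable $v$. Then for bounded measurable $v_1, v_2$, $\|T_n v_1 - T_n v_2\|_{sp} \le \Delta_n \|v_1 - v_2\|_{sp}$, where $\Delta_n := \sup_{x,x' \in E} \sup_{a,a' \in U} \sup_{B \in \mathcal{E}} \big(P_n^a(x,B) - P_n^{a'}(x',B)\big)$ is the Dobrushin-type coefficient. -/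
/-!
Write `u = v₁ - v₂`. Since `sup f - sup g` lies between `inf (f - g)` and `sup (f - g)`, the
difference `(T v₁ - T v₂) x - (T v₁ - T v₂) x'` is bounded by the largest value of
`∫ u dP^a(x) - ∫ u dP^{a'}(x')`. For two probability measures `μ, ν` with Hahn set `D` of
`μ - ν`, integrating `sup u - u ≥ 0` over `D` and `u - inf u ≥ 0` over `Dᶜ` gives
`∫ u dμ - ∫ u dν ≤ (μ D - ν D) (sup u - inf u) ≤ Δ ‖u‖_sp`.
-/

open MeasureTheory Filter

/-- Span seminorm of a real-valued function. -/
noncomputable def spanSeminorm {E : Type*} (v : E → ℝ) : ℝ :=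
  ⨆ p : E × E, (v p.1 - v p.2)

section Span

variable {E : Type*} {u : E → ℝ} {K : ℝ}

lemma bddAbove_range_sub_of_abs_le (hK : ∀ x, |u x| ≤ K) :
    BddAbove (Set.range fun p : E × E => u p.1 - u p.2) := by
  refine ⟨2 * K, ?_⟩
  rintro _ ⟨p, rfl⟩
  linarith [abs_le.1 (hK p.1), abs_le.1 (hK p.2)]

lemma sub_le_spanSeminorm (hK : ∀ x, |u x| ≤ K) (x y : E) : u x - u y ≤ spanSeminorm u :=
  le_ciSup (bddAbove_range_sub_of_abs_le hK) (x, y)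

lemma spanSeminorm_nonneg (hK : ∀ x, |u x| ≤ K) : 0 ≤ spanSeminorm u := by
  rcases isEmpty_or_nonempty E with hE | ⟨⟨x⟩⟩
  · simp [spanSeminorm]
  · simpa using sub_le_spanSeminorm hK x x

lemma iInf_le_of_abs_le (hK : ∀ x, |u x| ≤ K) (x : E) : ⨅ y, u y ≤ u x :=
  ciInf_le ⟨-K, by rintro _ ⟨y, rfl⟩; linarith [abs_le.1 (hK y)]⟩ x

lemma le_iInf_add_spanSeminorm (hK : ∀ x, |u x| ≤ K) (x : E) :
    u x ≤ (⨅ y, u y) + spanSeminorm u := by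
  have : Nonempty E := ⟨x⟩
  have : u x - spanSeminorm u ≤ ⨅ y, u y :=
    le_ciInf fun y => by linarith [sub_le_spanSeminorm hK x y]
  linarith

end Span

section Integral

variable {E : Type*} [MeasurableSpace E] {u : E → ℝ} {K : ℝ}

lemma integrable_of_abs_le {μ : Measure E} [IsFiniteMeasure μ] (hu : Measurable u)
    (hK : ∀ x, |u x| ≤ K) : Integrable u μ :=
  .of_bound hu.aestronglyMeasurable K (ae_of_all _ hK)

lemma abs_integral_le_of_abs_le {μ : Measure E} [IsProbabilityMeasure μ]
    (hK : ∀ x, |u x| ≤ K) : |∫ x, u x ∂μ| ≤ K := by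
  simpa using norm_integral_le_of_norm_le_const (μ := μ) (f := u) (ae_of_all _ hK)

lemma bddAbove_range_measureReal_sub {ι : Type*} (μ ν : ι → Measure E)
    [∀ i, IsProbabilityMeasure (μ i)] (s : ι → Set E) :
    BddAbove (Set.range fun i => (μ i).real (s i) - (ν i).real (s i)) := by
  refine ⟨1, ?_⟩
  rintro _ ⟨i, rfl⟩
  linarith [measureReal_le_one (μ := μ i) (s := s i), measureReal_nonneg (μ := ν i) (s := s i)]

variable {μ ν : Measure E} [IsProbabilityMeasure μ] [IsProbabilityMeasure ν]

lemma integral_sub_integral_le_of_isHahnSet {D : Set E} (hD : MeasurableSet D)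
    (hpos : ∀ s, MeasurableSet s → s ⊆ D → ν s ≤ μ s)
    (hneg : ∀ s, MeasurableSet s → s ⊆ Dᶜ → μ s ≤ ν s)
    (hμ : Integrable u μ) (hν : Integrable u ν) {m M : ℝ}
    (hm : ∀ x, m ≤ u x) (hM : ∀ x, u x ≤ M) :
    ∫ x, u x ∂μ - ∫ x, u x ∂ν ≤ (M - m) * (μ.real D - ν.real D) := by
  have hD_le : ν.restrict D ≤ μ.restrict D := Measure.le_iff.2 fun s hs => by
    simpa only [Measure.restrict_apply hs] using hpos _ (hs.inter hD) Set.inter_subset_right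
  have hDc_le : μ.restrict Dᶜ ≤ ν.restrict Dᶜ := Measure.le_iff.2 fun s hs => by
    simpa only [Measure.restrict_apply hs] using
      hneg _ (hs.inter hD.compl) Set.inter_subset_right
  have hon_D : ∫ x in D, M - u x ∂ν ≤ ∫ x in D, M - u x ∂μ :=
    integral_mono_measure hD_le (ae_of_all _ fun x => sub_nonneg.2 (hM x))
      ((integrable_const M).sub hμ).integrableOn
  have hon_Dc : ∫ x in Dᶜ, u x - m ∂μ ≤ ∫ x in Dᶜ, u x - m ∂ν :=
    integral_mono_measure hDc_le (ae_of_all _ fun x => sub_nonneg.2 (hm x))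
      (hν.sub (integrable_const m)).integrableOn
  rw [integral_sub (integrable_const _) hν.integrableOn,
    integral_sub (integrable_const _) hμ.integrableOn, setIntegral_const, setIntegral_const]
    at hon_D
  rw [integral_sub hμ.integrableOn (integrable_const _),
    integral_sub hν.integrableOn (integrable_const _), setIntegral_const, setIntegral_const,
    measureReal_compl hD, measureReal_compl hD] at hon_Dc
  simp only [smul_eq_mul, probReal_univ] at hon_D hon_Dc
  linarith [integral_add_compl hD hμ, integral_add_compl hD hν]

lemma integral_sub_integral_le_mul_spanSeminorm {Δ : ℝ}
    (hΔ : ∀ B, MeasurableSet B → μ.real B - ν.real B ≤ Δ)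
    (hu : Measurable u) (hK : ∀ x, |u x| ≤ K) :
    ∫ x, u x ∂μ - ∫ x, u x ∂ν ≤ Δ * spanSeminorm u := by
  obtain ⟨D, hD, hpos, hneg⟩ := hahn_decomposition μ ν
  calc ∫ x, u x ∂μ - ∫ x, u x ∂ν
      ≤ ((⨅ y, u y) + spanSeminorm u - ⨅ y, u y) * (μ.real D - ν.real D) :=
        integral_sub_integral_le_of_isHahnSet hD hpos hneg (integrable_of_abs_le hu hK)
          (integrable_of_abs_le hu hK) (iInf_le_of_abs_le hK) (le_iInf_add_spanSeminorm hK)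
    _ = (μ.real D - ν.real D) * spanSeminorm u := by ring
    _ ≤ Δ * spanSeminorm u := by gcongr; exacts [spanSeminorm_nonneg hK, hΔ D hD]

lemma bddAbove_range_add_integral {U : Type*} {Q : U → Measure E}
    [∀ a, IsProbabilityMeasure (Q a)] {c : U → ℝ} {M : ℝ} (hc : ∀ a, |c a| ≤ M)
    (hK : ∀ x, |u x| ≤ K) : BddAbove (Set.range fun a => c a + ∫ y, u y ∂(Q a)) := by
  refine ⟨M + K, ?_⟩
  rintro _ ⟨a, rfl⟩
  linarith [(abs_le.1 (hc a)).2, (abs_le.1 (abs_integral_le_of_abs_le (μ := Q a) hK)).2]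

end Integral

section Supremum

variable {ι : Type*} [Nonempty ι] {C : ℝ}

lemma ciSup_sub_ciSup_le {f g : ι → ℝ} (hg : BddAbove (Set.range g))
    (h : ∀ i, f i - g i ≤ C) : (⨆ i, f i) - ⨆ i, g i ≤ C := by
  have : ⨆ i, f i ≤ C + ⨆ i, g i :=
    ciSup_le fun i => by linarith [h i, le_ciSup hg i]
  linarith

lemma le_ciSup_sub_ciSup {f g : ι → ℝ} (hf : BddAbove (Set.range f))
    (h : ∀ i, C ≤ f i - g i) : C ≤ (⨆ i, f i) - ⨆ i, g i := by
  have : ⨆ i, g i ≤ (⨆ i, f i) - C :=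
    ciSup_le fun i => by linarith [h i, le_ciSup hf i]
  linarith

lemma ciSup_sub_ciSup_sub_le {f₁ f₂ g₁ g₂ : ι → ℝ} (hf₂ : BddAbove (Set.range f₂))
    (hg₁ : BddAbove (Set.range g₁)) (h : ∀ i j, f₁ i - f₂ i - (g₁ j - g₂ j) ≤ C) :
    ((⨆ i, f₁ i) - ⨆ i, f₂ i) - ((⨆ j, g₁ j) - ⨆ j, g₂ j) ≤ C := by
  have : ∀ j, (⨆ i, f₁ i) - (⨆ i, f₂ i) - C ≤ g₁ j - g₂ j := fun j => by
    have := ciSup_sub_ciSup_le (f := f₁) hf₂ (C := C + (g₁ j - g₂ j)) fun i => by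
      linarith [h i j]
    linarith
  linarith [le_ciSup_sub_ciSup hg₁ this]

end Supremum

theorem stmt_5 {E U : Type*} [MeasurableSpace E] [Nonempty E] [Nonempty U]
    (P : ℕ → U → E → Measure E) (hP : ∀ n a x, IsProbabilityMeasure (P n a x))
    (c : ℕ → E → U → ℝ) (hcb : ∀ n, ∃ M, ∀ x a, |c n x a| ≤ M)
    (n : ℕ) (Δn : ℝ)
    (hΔ : Δn = ⨆ q : (E × E) × (U × U) × {B : Set E // MeasurableSet B},
      ((P n q.2.1.1 q.1.1 q.2.2.1).toReal - (P n q.2.1.2 q.1.2 q.2.2.1).toReal))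
    (v₁ v₂ : E → ℝ) (hm₁ : Measurable v₁) (hm₂ : Measurable v₂)
    (hb₁ : ∃ M, ∀ x, |v₁ x| ≤ M) (hb₂ : ∃ M, ∀ x, |v₂ x| ≤ M) :
    spanSeminorm
        ((fun x => ⨆ a : U, (c n x a + ∫ y, v₁ y ∂(P n a x))) -
          fun x => ⨆ a : U, (c n x a + ∫ y, v₂ y ∂(P n a x)))
      ≤ Δn * spanSeminorm (v₁ - v₂) := by
  have := hP n
  obtain ⟨Mc, hMc⟩ := hcb n
  obtain ⟨K₁, hK₁⟩ := hb₁
  obtain ⟨K₂, hK₂⟩ := hb₂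
  have hK : ∀ x, |(v₁ - v₂) x| ≤ K₁ + K₂ := fun x =>
    (abs_sub _ _).trans (add_le_add (hK₁ x) (hK₂ x))
  have hΔ_ge : ∀ a a' x x' B, MeasurableSet B →
      (P n a x).real B - (P n a' x').real B ≤ Δn := fun a a' x x' B hB =>
    hΔ ▸ le_ciSup (bddAbove_range_measureReal_sub
      (fun q : (E × E) × (U × U) × {B : Set E // MeasurableSet B} => P n q.2.1.1 q.1.1)
      (fun q => P n q.2.1.2 q.1.2) fun q => q.2.2.1) ⟨(x, x'), (a, a'), ⟨B, hB⟩⟩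
  have hdiff : ∀ a x, ∫ y, v₁ y ∂(P n a x) - ∫ y, v₂ y ∂(P n a x)
      = ∫ y, (v₁ - v₂) y ∂(P n a x) := fun a x =>
    (integral_sub (integrable_of_abs_le hm₁ hK₁) (integrable_of_abs_le hm₂ hK₂)).symm
  refine ciSup_le fun ⟨x, x'⟩ => ciSup_sub_ciSup_sub_le
    (bddAbove_range_add_integral (hMc x) hK₂) (bddAbove_range_add_integral (hMc x') hK₁)
    fun a a' => ?_
  have := integral_sub_integral_le_mul_spanSeminorm (hΔ_ge a a' x x') (hm₁.sub hm₂) hK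
  linarith [hdiff a x, hdiff a' x']
end

section
/- Let $(E,\mathcal{E})$ be a measurable space and $P(x,\cdot)$, $x \in E$, a family of probability measures such that $K := \sup_{x,x' \in E} \sup_{B \in \mathcal{E}, P(x',B)>0} \frac{P(x,B)}{P(x',B)} < \infty$. Then for every bounded measurable $v : E \to \mathbb{R}$ and every $\gamma \ne 0$, the function $x \mapsto \frac{1}{\gamma} \ln \int_E e^{\gamma v(y)} P(x,dy)$ has span seminorm at most $\frac{1}{|\gamma|} \ln K$. -/
open MeasureTheory

theorem stmt_7 {E : Type*} [MeasurableSpace E] [Nonempty E]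
    (P : E → Measure E) (hP : ∀ x, IsProbabilityMeasure (P x)) (K : ℝ)
    (hK : ∀ x x' (B : Set E), MeasurableSet B →
      (P x B).toReal ≤ K * (P x' B).toReal)
    (v : E → ℝ) (hm : Measurable v) (hb : ∃ M, ∀ x, |v x| ≤ M)
    (γ : ℝ) (hγ : γ ≠ 0) :
    spanSeminorm (fun x => (1 / γ) * Real.log (∫ y, Real.exp (γ * v y) ∂(P x)))
      ≤ (1 / |γ|) * Real.log K := by
  haveI := hP
  obtain ⟨M, hM⟩ := hb
  -- K ≥ 1
  have hK1 : (1 : ℝ) ≤ K := by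
    have h := hK (Classical.arbitrary E) (Classical.arbitrary E) Set.univ MeasurableSet.univ
    simpa [measure_univ] using h
  have hK0 : 0 < K := lt_of_lt_of_le one_pos hK1
  set I : E → ℝ := fun x => ∫ y, Real.exp (γ * v y) ∂(P x) with hI
  -- integrability
  have hint : ∀ x, Integrable (fun y => Real.exp (γ * v y)) (P x) := by
    intro x
    refine Integrable.mono' (integrable_const (Real.exp (|γ| * M)))
      ((Real.measurable_exp.comp (hm.const_mul γ)).aestronglyMeasurable) ?_
    filter_upwards with y
    rw [Real.norm_eq_abs, abs_of_pos (Real.exp_pos _)]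
    apply Real.exp_le_exp.2
    calc γ * v y ≤ |γ * v y| := le_abs_self _
      _ = |γ| * |v y| := abs_mul _ _
      _ ≤ |γ| * M := by
          exact mul_le_mul_of_nonneg_left (hM y) (abs_nonneg γ)
  -- positivity
  have hIpos : ∀ x, 0 < I x := by
    intro x
    have : ∀ y, Real.exp (-( |γ| * M)) ≤ Real.exp (γ * v y) := by
      intro y
      apply Real.exp_le_exp.2
      have : γ * v y ≥ -|γ * v y| := neg_abs_le _
      calc -(|γ| * M) = -(|γ| * M) := rfl
        _ ≤ -(|γ| * |v y|) := by
            simp only [neg_le_neg_iff]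
            exact mul_le_mul_of_nonneg_left (hM y) (abs_nonneg γ)
        _ = -|γ * v y| := by rw [abs_mul]
        _ ≤ γ * v y := neg_abs_le _
    have hlow : Real.exp (-(|γ| * M)) ≤ I x := by
      have := integral_mono (integrable_const _) (hint x) this
      simpa [integral_const, measure_univ] using this
    exact lt_of_lt_of_le (Real.exp_pos _) hlow
  -- key inequality via measure comparison
  have hmeas : ∀ x x', P x ≤ (ENNReal.ofReal K) • P x' := by
    intro x x'
    rw [Measure.le_iff]
    intro s hs
    have h := hK x x' s hs
    have h1 : P x s = ENNReal.ofReal ((P x s).toReal) := by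
      rw [ENNReal.ofReal_toReal (measure_ne_top _ _)]
    rw [h1]
    calc ENNReal.ofReal ((P x s).toReal)
        ≤ ENNReal.ofReal (K * (P x' s).toReal) := ENNReal.ofReal_le_ofReal h
      _ = ENNReal.ofReal K * ENNReal.ofReal ((P x' s).toReal) := by
          rw [ENNReal.ofReal_mul hK0.le]
      _ = ENNReal.ofReal K * P x' s := by
          rw [ENNReal.ofReal_toReal (measure_ne_top _ _)]
      _ = ((ENNReal.ofReal K) • P x') s := by simp [Measure.smul_apply]
  have hkey : ∀ x x', I x ≤ K * I x' := by
    intro x x'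
    have h1 : I x ≤ ∫ y, Real.exp (γ * v y) ∂((ENNReal.ofReal K) • P x') := by
      apply integral_mono_measure (hmeas x x')
      · filter_upwards with y using (Real.exp_pos _).le
      · exact (hint x').smul_measure ENNReal.ofReal_ne_top
    have h2 : ∫ y, Real.exp (γ * v y) ∂((ENNReal.ofReal K) • P x')
        = K * I x' := by
      rw [integral_smul_measure, ENNReal.toReal_ofReal hK0.le]
      rfl
    linarith
  -- conclude
  have hterm : ∀ x x', (1 / γ) * Real.log (I x) - (1 / γ) * Real.log (I x')
      ≤ (1 / |γ|) * Real.log K := by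
    intro x x'
    rcases lt_or_gt_of_ne hγ with hneg | hpos
    · have hlog : Real.log (I x') ≤ Real.log K + Real.log (I x) := by
        rw [← Real.log_mul hK0.ne' (hIpos x).ne']
        exact Real.log_le_log (hIpos x') (hkey x' x)
      have hγ' : (0:ℝ) < -γ := by linarith
      rw [abs_of_neg hneg]
      have h2 : (1/γ) * Real.log (I x) - (1/γ) * Real.log (I x')
          = (1/(-γ)) * (Real.log (I x') - Real.log (I x)) := by
        field_simp
        ring
      rw [h2]
      exact mul_le_mul_of_nonneg_left (by linarith) (one_div_pos.2 hγ').le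
    · have hlog : Real.log (I x) ≤ Real.log K + Real.log (I x') := by
        rw [← Real.log_mul hK0.ne' (hIpos x').ne']
        exact Real.log_le_log (hIpos x) (hkey x x')
      rw [abs_of_pos hpos]
      have h2 : (1/γ) * Real.log (I x) - (1/γ) * Real.log (I x')
          = (1/γ) * (Real.log (I x) - Real.log (I x')) := by ring
      rw [h2]
      exact mul_le_mul_of_nonneg_left (by linarith) (one_div_pos.2 hpos).le
  apply ciSup_le
  intro p
  exact hterm p.1 p.2
end

section
/- Let $(E,\mathcal{E})$ be a measurable space, $U$ nonempty, $c_n : E \times U \to \mathbb{R}$ bounded with span norm $\|c_n\|_{sp} = \sup_{x,x'}\sup_{a,a'}(c_n(x,a) - c_n(x',a'))$, and $P_n^a(x,\cdot)$ Markov kernels with ratio bound $K_n := \sup_{x,x'}\sup_a \sup_B P_n^a(x,B)/P_n^a(x',B) < \infty$. For fixed $\gamma \ne 0$ define $\tilde T_n v(x) = \sup_{a\in U}\big[c_n(x,a) + \frac{1}{\gamma}\ln \int_E e^{\gamma v(y)} P_n^a(x,dy)\big]$. Then for every bounded measurable $v$, $\|\tilde T_n v\|_{sp} \le \|c_n\|_{sp}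 + \frac{1}{|\gamma|}\ln K_n$. -/
/-!
The ratio bound says `P^a(x, ·) ≤ K • P^a(x', ·)` as measures, so the integrals of `e^{γ v}` against
`P^a(x, ·)` and `P^a(x', ·)` are within a factor `K` of each other, their logarithms within `ln K`,
and the log terms of `T̃ v` within `ln K / |γ|`. Together with the oscillation of `c`, the expressions
maximized in `T̃ v(x)` and `T̃ v(x')` differ by at most `‖c‖_sp + ln K / |γ|` for each fixed action,
and a bound uniform in the action passes to the suprema.
-/

open MeasureTheory

/- The lemmas below also cover the degenerate cases through Lean's junk values: an unbounded
supremum is `0`, and so are the integral of a non-integrable function and `Real.log 0`. -/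

theorem Real.iSup_sub_iSup_le_of_abs_sub_le {ι : Sort*} [Nonempty ι] {f g : ι → ℝ} {C : ℝ}
    (h : ∀ i, |f i - g i| ≤ C) : (⨆ i, f i) - ⨆ i, g i ≤ C := by
  have hC : 0 ≤ C := (abs_nonneg _).trans (h (Classical.arbitrary ι))
  by_cases hg : BddAbove (Set.range g)
  · rw [sub_le_iff_le_add]
    refine ciSup_le fun i => ?_
    linarith [(abs_sub_le_iff.1 (h i)).1, le_ciSup hg i]
  · have hf : ¬BddAbove (Set.range f) := fun ⟨M, hM⟩ => hg ⟨M + C, by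
      rintro _ ⟨i, rfl⟩
      linarith [(abs_sub_le_iff.1 (h i)).2, hM ⟨i, rfl⟩]⟩
    simpa [Real.iSup_of_not_bddAbove hf, Real.iSup_of_not_bddAbove hg] using hC

theorem Real.abs_log_sub_log_le_log {a b K : ℝ} (ha : 0 ≤ a) (hb : 0 ≤ b)
    (hab : a ≤ K * b) (hba : b ≤ K * a) (hK : 1 ≤ K) : |Real.log a - Real.log b| ≤ Real.log K := by
  rcases ha.eq_or_lt with rfl | ha
  · obtain rfl : b = 0 := le_antisymm (by simpa using hba) hb
    simpa using Real.log_nonneg hK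
  have hb : 0 < b := pos_of_mul_pos_right (ha.trans_le hab) (by linarith)
  have hK : 0 < K := by linarith
  rw [abs_sub_le_iff, sub_le_iff_le_add, sub_le_iff_le_add, ← Real.log_mul hK.ne' hb.ne',
    ← Real.log_mul hK.ne' ha.ne']
  exact ⟨Real.log_le_log ha hab, Real.log_le_log hb hba⟩

namespace MeasureTheory

variable {α : Type*} [MeasurableSpace α] {μ ν : Measure α} {K : ℝ}

theorem Measure.le_ofReal_smul_of_toReal_le [IsFiniteMeasure μ] [IsFiniteMeasure ν] (hK : 0 ≤ K)
    (h : ∀ s, MeasurableSet s → (μ s).toReal ≤ K * (ν s).toReal) :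
    μ ≤ ENNReal.ofReal K • ν := by
  refine Measure.le_iff.2 fun s hs => ?_
  rw [Measure.smul_apply, smul_eq_mul, ← ENNReal.ofReal_toReal (measure_ne_top μ s),
    ← ENNReal.ofReal_toReal (measure_ne_top ν s), ← ENNReal.ofReal_mul hK]
  exact ENNReal.ofReal_le_ofReal (h s hs)

theorem integral_le_mul_integral_of_le_ofReal_smul {f : α → ℝ} (hf : 0 ≤ f) (hK : 0 ≤ K)
    (hμν : μ ≤ ENNReal.ofReal K • ν) (hνμ : ν ≤ ENNReal.ofReal K • μ) :
    ∫ y, f y ∂μ ≤ K * ∫ y, f y ∂ν := by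
  by_cases hint : Integrable f μ
  · have hintν : Integrable f ν := (hint.smul_measure ENNReal.ofReal_ne_top).mono_measure hνμ
    calc ∫ y, f y ∂μ ≤ ∫ y, f y ∂(ENNReal.ofReal K • ν) :=
          integral_mono_measure hμν (ae_of_all _ hf) (hintν.smul_measure ENNReal.ofReal_ne_top)
      _ = K * ∫ y, f y ∂ν := by rw [integral_smul_measure, ENNReal.toReal_ofReal hK, smul_eq_mul]
  · rw [integral_undef hint]
    exact mul_nonneg hK (integral_nonneg hf)

theorem abs_log_integral_sub_log_integral_le {f : α → ℝ} (hf : 0 ≤ f) (hK : 1 ≤ K)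
    (hμν : μ ≤ ENNReal.ofReal K • ν) (hνμ : ν ≤ ENNReal.ofReal K • μ) :
    |Real.log (∫ y, f y ∂μ) - Real.log (∫ y, f y ∂ν)| ≤ Real.log K :=
  Real.abs_log_sub_log_le_log (integral_nonneg hf) (integral_nonneg hf)
    (integral_le_mul_integral_of_le_ofReal_smul hf (by linarith) hμν hνμ)
    (integral_le_mul_integral_of_le_ofReal_smul hf (by linarith) hνμ hμν) hK

end MeasureTheory

theorem stmt_8_general {E U : Type*} [MeasurableSpace E] [Nonempty E] [Nonempty U]
    (P : U → E → Measure E) (hP : ∀ a x, IsProbabilityMeasure (P a x))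
    (c : E → U → ℝ) (csp : ℝ)
    (hcsp : ∀ x x' a a', c x a - c x' a' ≤ csp)
    (K : ℝ)
    (hK : ∀ (a : U) x x' (B : Set E), MeasurableSet B →
      (P a x B).toReal ≤ K * (P a x' B).toReal)
    (v : E → ℝ)
    (γ : ℝ) :
    spanSeminorm
        (fun x => ⨆ a : U, (c x a + (1 / γ) * Real.log (∫ y, Real.exp (γ * v y) ∂(P a x))))
      ≤ csp + (1 / |γ|) * Real.log K := by
  obtain ⟨a₀⟩ := ‹Nonempty U›
  obtain ⟨x₀⟩ := ‹Nonempty E›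
  have hK₁ : 1 ≤ K := by
    have := hP a₀ x₀
    simpa using hK a₀ x₀ x₀ Set.univ MeasurableSet.univ
  have hPK : ∀ a x x', P a x ≤ ENNReal.ofReal K • P a x' := fun a x x' => by
    have := hP a x
    have := hP a x'
    exact Measure.le_ofReal_smul_of_toReal_le (by linarith) (hK a x x')
  unfold spanSeminorm
  refine ciSup_le fun (x, x') => Real.iSup_sub_iSup_le_of_abs_sub_le fun a => ?_
  have hlog := abs_log_integral_sub_log_integral_le (fun y => (Real.exp_pos (γ * v y)).le)
    hK₁ (hPK a x x') (hPK a x' x)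
  calc _ = |(c x a - c x' a) + 1 / γ * (Real.log (∫ y, Real.exp (γ * v y) ∂(P a x))
          - Real.log (∫ y, Real.exp (γ * v y) ∂(P a x')))| := by ring_nf
    _ ≤ csp + 1 / |γ| * Real.log K := by
      refine (abs_add_le _ _).trans (add_le_add (abs_sub_le_iff.2 ⟨hcsp .., hcsp ..⟩) ?_)
      rw [abs_mul, abs_div, abs_one]
      exact mul_le_mul_of_nonneg_left hlog (by positivity)

theorem stmt_8 {E U : Type*} [MeasurableSpace E] [Nonempty E] [Nonempty U]
    (P : U → E → Measure E) (hP : ∀ a x, IsProbabilityMeasure (P a x))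
    (c : E → U → ℝ) (csp : ℝ)
    (hcsp : ∀ x x' a a', c x a - c x' a' ≤ csp)
    (hcb : ∃ M, ∀ x a, |c x a| ≤ M)
    (K : ℝ)
    (hK : ∀ (a : U) x x' (B : Set E), MeasurableSet B →
      (P a x B).toReal ≤ K * (P a x' B).toReal)
    (v : E → ℝ) (hm : Measurable v) (hb : ∃ M, ∀ x, |v x| ≤ M)
    (γ : ℝ) (hγ : γ ≠ 0) :
    spanSeminorm
        (fun x => ⨆ a : U, (c x a + (1 / γ) * Real.log (∫ y, Real.exp (γ * v y) ∂(P a x))))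
      ≤ csp + (1 / |γ|) * Real.log K :=
  stmt_8_general P hP c csp hcsp K hK v γ
end

section
/- Verification theorem for average reward: suppose bounded functions $w_n$ and constants $\lambda_n$ satisfy, for all $n$ and $x$, $w_n(x) = \sup_{a \in U}\big[c_n(x,a) - \lambda_n + \int_E w_{n+1}(y) P_n^a(x,dy)\big]$ with $\sup_n \|w_n\| < \infty$ (supremum norm). Then for every admissible control sequence $V = (a_0, a_1, \ldots)$, $\liminf_{n\to\infty} \frac{1}{n}\mathbb{E}_x^V\big[\sum_{i=0}^{n-1} c_i(X_i, a_i)\big] \le \liminf_{n\to\infty}\frac{1}{n}\sum_{i=0}^{n-1}\lambda_i$, with equality when $a_i = u_i(X_i)$ for measurable selectors $u_i$ attaining the supremum. -/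
/-! Telescoping the Bellman inequality `c_k - λ_k + P_k w_{k+1} ≤ w_k` along any control bounds
the expected reward of the first `n` steps by `∑_{i<n} λ_i + w_0(x) + C`, where `C` bounds all
`|w_k|`; along a maximising selector the inequality is an equality, giving the lower bound
`∑_{i<n} λ_i + w_0(x) - C`. After dividing by `n` the two sides differ by `O(1/n)`, which does
not change a liminf. All averages stay bounded, since `c` is bounded and the Bellman equation
forces `|λ_n| ≤ sup |c| + 2C`. -/

open MeasureTheory Filter

/-- Expected total reward over `m` remaining steps, starting at time `k` with
history `h` (most recent state first), for the controlled time-inhomogeneous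
Markov chain with kernels `P`, rewards `c` and (history-dependent) control `a`:
`rewSum P c a k m h = E[∑_{i=k}^{k+m-1} c_i(X_i, a_i) | history h]`. -/
noncomputable def rewSum {E U : Type*} [MeasurableSpace E] [Inhabited E]
    (P : ℕ → U → E → Measure E) (c : ℕ → E → U → ℝ)
    (a : ℕ → List E → U) : ℕ → ℕ → List E → ℝ
  | _, 0, _ => 0
  | k, m + 1, h => c k h.headI (a k h) +
      ∫ y, rewSum P c a (k + 1) m (y :: h) ∂(P k (a k h) h.headI)

open Topology

lemma abs_integral_le_of_abs_le_s13 {α : Type*} [MeasurableSpace α] {μ : Measure α}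
    [IsProbabilityMeasure μ] {f : α → ℝ} {C : ℝ} (h : ∀ x, |f x| ≤ C) :
    |∫ x, f x ∂μ| ≤ C := by
  simpa using norm_integral_le_of_norm_le_const (μ := μ) (f := f) (Eventually.of_forall h)

lemma liminf_le_liminf_of_le_add_of_tendsto_zero {ι : Type*} {L : Filter ι} [L.NeBot]
    {f g e : ι → ℝ} (hf : IsBoundedUnder (· ≥ ·) L f) (hg : IsBoundedUnder (· ≤ ·) L g)
    (hg' : IsBoundedUnder (· ≥ ·) L g) (he : Tendsto e L (𝓝 0))
    (h : ∀ᶠ i in L, f i ≤ e i + g i) :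
    liminf f L ≤ liminf g L :=
  calc liminf f L ≤ liminf (e + g) L :=
        liminf_le_liminf h hf (isBoundedUnder_le_add he.isBoundedUnder_le hg).isCoboundedUnder_ge
    _ ≤ limsup e L + liminf g L :=
        liminf_add_le he.isBoundedUnder_ge he.isBoundedUnder_le hg' hg.isCoboundedUnder_ge
    _ = liminf g L := by rw [he.limsup_eq, zero_add]

lemma abs_one_div_mul_le {y B : ℝ} {n : ℕ} (hB : 0 ≤ B) (h : |y| ≤ n * B) :
    |1 / (n : ℝ) * y| ≤ B := by
  rcases n.eq_zero_or_pos with rfl | hn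
  · simpa using hB
  · rw [abs_mul, abs_of_pos (by positivity), one_div_mul_eq_div, div_le_iff₀ (by positivity)]
    linarith

lemma isBoundedUnder_one_div_mul {F : ℕ → ℝ} {B : ℝ} (hF : ∀ n, |F n| ≤ n * B) :
    IsBoundedUnder (· ≤ ·) atTop (fun n : ℕ => 1 / (n : ℝ) * F n) ∧
      IsBoundedUnder (· ≥ ·) atTop (fun n : ℕ => 1 / (n : ℝ) * F n) := by
  have hB : 0 ≤ B := by simpa using (abs_nonneg _).trans (hF 1)
  have hbd n := abs_le.1 (abs_one_div_mul_le hB (hF n))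
  exact ⟨isBoundedUnder_of ⟨B, fun n => (hbd n).2⟩,
    isBoundedUnder_of ⟨-B, fun n => (hbd n).1⟩⟩

lemma liminf_one_div_mul_le_of_le_add {F G : ℕ → ℝ} {BF BG D : ℝ}
    (hF : ∀ n, |F n| ≤ n * BF) (hG : ∀ n, |G n| ≤ n * BG) (h : ∀ n, F n ≤ G n + D) :
    liminf (fun n : ℕ => 1 / (n : ℝ) * F n) atTop ≤
      liminf (fun n : ℕ => 1 / (n : ℝ) * G n) atTop := by
  refine liminf_le_liminf_of_le_add_of_tendsto_zero (isBoundedUnder_one_div_mul hF).2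
    (isBoundedUnder_one_div_mul hG).1 (isBoundedUnder_one_div_mul hG).2
    (tendsto_const_div_atTop_nhds_zero_nat D) (Eventually.of_forall fun n => ?_)
  calc 1 / (n : ℝ) * F n ≤ 1 / (n : ℝ) * (G n + D) := by gcongr; exact h n
    _ = D / n + 1 / (n : ℝ) * G n := by ring

lemma abs_sum_range_le_mul {b : ℕ → ℝ} {B : ℝ} (hb : ∀ i, |b i| ≤ B) (n : ℕ) :
    |∑ i ∈ Finset.range n, b i| ≤ n * B :=
  calc |∑ i ∈ Finset.range n, b i| ≤ ∑ i ∈ Finset.range n, |b i| :=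
        Finset.abs_sum_le_sum_abs _ _
    _ ≤ n * B := by
      simpa using Finset.sum_le_card_nsmul (Finset.range n) _ _ fun i _ => hb i

section RewSum

variable {E U : Type*} [MeasurableSpace E] [Inhabited E] {P : ℕ → U → E → Measure E}
  {c : ℕ → E → U → ℝ} {a : ℕ → List E → U}

lemma abs_rewSum_le (hP : ∀ n a x, IsProbabilityMeasure (P n a x)) {M : ℝ}
    (hM : ∀ n x a, |c n x a| ≤ M) (m k : ℕ) (h : List E) :
    |rewSum P c a k m h| ≤ m * M := by
  induction m generalizing k h with
  | zero => simp [rewSum]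
  | succ m ih =>
    have := hP k (a k h) h.headI
    calc |rewSum P c a k (m + 1) h|
        ≤ |c k h.headI (a k h)| +
            |∫ y, rewSum P c a (k + 1) m (y :: h) ∂(P k (a k h) h.headI)| := abs_add_le _ _
      _ ≤ M + m * M := add_le_add (hM _ _ _) (abs_integral_le_of_abs_le_s13 fun y => ih _ _)
      _ = (m + 1 : ℕ) * M := by push_cast; ring

lemma rewSum_neg (m k : ℕ) (h : List E) : rewSum P (-c) a k m h = -rewSum P c a k m h := by
  induction m generalizing k h with
  | zero => simp [rewSum]
  | succ m ih => simp [rewSum, ih, integral_neg]; ring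

lemma sum_range_succ_shift (l : ℕ → ℝ) (k m : ℕ) :
    ∑ i ∈ Finset.range (m + 1), l (k + i) = l k + ∑ i ∈ Finset.range m, l (k + 1 + i) := by
  rw [Finset.sum_range_succ', add_comm]
  simp only [add_zero, add_assoc, add_comm 1]

variable {w : ℕ → E → ℝ} {l : ℕ → ℝ} {C : ℝ}

lemma rewSum_le_sum_add (hP : ∀ n a x, IsProbabilityMeasure (P n a x))
    (hInt : ∀ k m h, Integrable (fun y => rewSum P c a (k + 1) m (y :: h)) (P k (a k h) h.headI))
    (hw : ∀ k h, Integrable (w (k + 1)) (P k (a k h) h.headI)) (hC : ∀ n x, -C ≤ w n x)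
    (hsub : ∀ k h,
      c k h.headI (a k h) - l k + ∫ y, w (k + 1) y ∂(P k (a k h) h.headI) ≤ w k h.headI)
    (m k : ℕ) (h : List E) :
    rewSum P c a k m h ≤ ∑ i ∈ Finset.range m, l (k + i) + w k h.headI + C := by
  induction m generalizing k h with
  | zero => simp only [rewSum, Finset.range_zero, Finset.sum_empty]; linarith [hC k h.headI]
  | succ m ih =>
    have := hP k (a k h) h.headI
    set S := ∑ i ∈ Finset.range m, l (k + 1 + i)
    have hstep : ∫ y, rewSum P c a (k + 1) m (y :: h) ∂(P k (a k h) h.headI) ≤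
        ∫ y, w (k + 1) y ∂(P k (a k h) h.headI) + (S + C) :=
      calc _ ≤ ∫ y, w (k + 1) y + (S + C) ∂(P k (a k h) h.headI) :=
            integral_mono (hInt k m h) ((hw k h).add (integrable_const _)) fun y => by
              have := ih (k + 1) (y :: h)
              rw [List.headI_cons] at this
              linarith
        _ = _ := by rw [integral_add (hw k h) (integrable_const _)]; simp
    rw [rewSum, sum_range_succ_shift]
    linarith [hsub k h]

lemma sum_sub_le_rewSum (hP : ∀ n a x, IsProbabilityMeasure (P n a x))
    (hInt : ∀ k m h, Integrable (fun y => rewSum P c a (k + 1) m (y :: h)) (P k (a k h) h.headI))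
    (hw : ∀ k h, Integrable (w (k + 1)) (P k (a k h) h.headI)) (hC : ∀ n x, w n x ≤ C)
    (hsuper : ∀ k h,
      w k h.headI ≤ c k h.headI (a k h) - l k + ∫ y, w (k + 1) y ∂(P k (a k h) h.headI))
    (m k : ℕ) (h : List E) :
    ∑ i ∈ Finset.range m, l (k + i) + w k h.headI - C ≤ rewSum P c a k m h := by
  have := rewSum_le_sum_add (c := -c) (w := -w) (l := -l) hP
    (fun k m h => by simp only [rewSum_neg]; exact (hInt k m h).neg) (fun k h => (hw k h).neg)
    (fun n x => neg_le_neg (hC n x))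
    (fun k h => by simp only [Pi.neg_apply, integral_neg]; linarith [hsuper k h]) m k h
  simp only [rewSum_neg, Pi.neg_apply, Finset.sum_neg_distrib] at this
  linarith

end RewSum

section Bellman

variable {E U : Type*} [MeasurableSpace E] {P : ℕ → U → E → Measure E}
  {c : ℕ → E → U → ℝ} {w : ℕ → E → ℝ} {l : ℕ → ℝ} {M C : ℝ}

lemma action_value_le_of_abs_le (hP : ∀ n a x, IsProbabilityMeasure (P n a x))
    (hM : ∀ n x a, |c n x a| ≤ M) (hC : ∀ n x, |w n x| ≤ C) (n : ℕ) (x : E) (a : U) :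
    c n x a - l n + ∫ y, w (n + 1) y ∂(P n a x) ≤ M - l n + C := by
  have := hP n a x
  have hint := abs_integral_le_of_abs_le_s13 (μ := P n a x) (hC (n + 1))
  linarith [(abs_le.1 (hM n x a)).2, (abs_le.1 hint).2]

lemma action_value_le_of_bellman (hP : ∀ n a x, IsProbabilityMeasure (P n a x))
    (hM : ∀ n x a, |c n x a| ≤ M) (hC : ∀ n x, |w n x| ≤ C)
    (hBel : ∀ n x, w n x = ⨆ a : U, (c n x a - l n + ∫ y, w (n + 1) y ∂(P n a x)))
    (n : ℕ) (x : E) (a : U) :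
    c n x a - l n + ∫ y, w (n + 1) y ∂(P n a x) ≤ w n x :=
  have hbdd := Set.forall_mem_range.2 (action_value_le_of_abs_le hP hM hC n x)
  (le_ciSup ⟨_, hbdd⟩ a).trans_eq (hBel n x).symm

lemma abs_le_of_bellman [Inhabited E] [Nonempty U]
    (hP : ∀ n a x, IsProbabilityMeasure (P n a x))
    (hM : ∀ n x a, |c n x a| ≤ M) (hC : ∀ n x, |w n x| ≤ C)
    (hBel : ∀ n x, w n x = ⨆ a : U, (c n x a - l n + ∫ y, w (n + 1) y ∂(P n a x)))
    (n : ℕ) :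
    |l n| ≤ M + 2 * C := by
  obtain ⟨a⟩ := ‹Nonempty U›
  have := hP n a default
  have hupper : w n default ≤ M - l n + C :=
    (hBel n default).trans_le (ciSup_le (action_value_le_of_abs_le hP hM hC n default))
  have hlower := action_value_le_of_bellman hP hM hC hBel n default a
  have := abs_le.1 (hC n default)
  have := abs_le.1 (hM n default a)
  have := abs_le.1 (abs_integral_le_of_abs_le_s13 (μ := P n a default) (hC (n + 1)))
  rw [abs_le]
  constructor <;> linarith

end Bellman

theorem stmt_13 {E U : Type*} [MeasurableSpace E] [Inhabited E] [Nonempty U]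
    (P : ℕ → U → E → Measure E) (hP : ∀ n a x, IsProbabilityMeasure (P n a x))
    (c : ℕ → E → U → ℝ) (hcb : ∃ M, ∀ n x a, |c n x a| ≤ M)
    (w : ℕ → E → ℝ) (l : ℕ → ℝ)
    (hwm : ∀ n, Measurable (w n)) (hwb : ∃ C, ∀ n x, |w n x| ≤ C)
    (hBel : ∀ n x, w n x = ⨆ a : U, (c n x a - l n + ∫ y, w (n + 1) y ∂(P n a x)))
    (x : E) :
    (∀ a : ℕ → List E → U,
      (∀ k m h, Integrable (fun y => rewSum P c a (k + 1) m (y :: h))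
          (P k (a k h) h.headI)) →
      liminf (fun n : ℕ => (1 / (n : ℝ)) * rewSum P c a 0 n [x]) atTop ≤
        liminf (fun n : ℕ => (1 / (n : ℝ)) * ∑ i ∈ Finset.range n, l i) atTop) ∧
    (∀ u : ℕ → E → U,
      (∀ n y, w n y = c n y (u n y) - l n + ∫ z, w (n + 1) z ∂(P n (u n y) y)) →
      (∀ k m h, Integrable
          (fun y => rewSum P c (fun j hist => u j hist.headI) (k + 1) m (y :: h))
          (P k (u k h.headI) h.headI)) →
      liminf (fun n : ℕ =>
          (1 / (n : ℝ)) * rewSum P c (fun j hist => u j hist.headI) 0 n [x]) atTop =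
        liminf (fun n : ℕ => (1 / (n : ℝ)) * ∑ i ∈ Finset.range n, l i) atTop) := by
  obtain ⟨M, hM⟩ := hcb
  obtain ⟨C, hC⟩ := hwb
  have hw (n m : ℕ) (a : U) (y : E) : Integrable (w m) (P n a y) :=
    have := hP n a y
    .of_bound (hwm m).aestronglyMeasurable C (.of_forall (hC m))
  have hlsum := abs_sum_range_le_mul (abs_le_of_bellman hP hM hC hBel)
  have hrew (a : ℕ → List E → U) := (abs_rewSum_le (a := a) hP hM · 0 [x])
  have hupper (a : ℕ → List E → U)
      (hInt : ∀ k m h, Integrable (fun y => rewSum P c a (k + 1) m (y :: h))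
        (P k (a k h) h.headI)) (n : ℕ) :
      rewSum P c a 0 n [x] ≤ ∑ i ∈ Finset.range n, l i + (w 0 x + C) := by
    simpa [add_assoc] using rewSum_le_sum_add hP hInt (fun _ _ => hw _ _ _ _)
      (fun n x => (abs_le.1 (hC n x)).1)
      (fun k h => action_value_le_of_bellman hP hM hC hBel k h.headI (a k h)) n 0 [x]
  refine ⟨fun a hInt => liminf_one_div_mul_le_of_le_add (hrew a) hlsum (hupper a hInt),
    fun u hSel hInt => le_antisymm
      (liminf_one_div_mul_le_of_le_add (hrew _) hlsum (hupper _ hInt))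
      (liminf_one_div_mul_le_of_le_add (D := C - w 0 x) hlsum (hrew _) fun n => ?_)⟩
  have := sum_sub_le_rewSum hP hInt (fun _ _ => hw _ _ _ _)
    (fun n x => (abs_le.1 (hC n x)).2) (fun k h => (hSel k h.headI).le) n 0 [x]
  simp only [zero_add, List.headI_cons] at this
  linarith
end
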